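/- arXiv:2505.20885 — 2 statements merged into one kernel-verified Lean document; each statement's English description precedes it below -/
import Mathlib

section
/- There exists a constant C > 0 such that the following holds for all positive integers d, T, N, all ε ∈ (0,1), and all δ ∈ (0,1). Let x_1,…,x_T ∈ X_d, y_1,…,y_T ∈ {0,1}, and P_1,…,P_T be probability distributions on the grid Z, and let p_1,…,p_T be independent random variables with p_t distributed according to P_t. Then with probability at least 1 − δ, SMCal_{F_1^lin,2} ≤ C·( N·log(N/δ) + N·d·log(1/ε) + PSMCal_{F_1^lin,2} + ε²·T ). -/
/-!
Fix a bucket `p` and a linear function `f`. The realized sum `∑ₜ 1[pₜ = p] f(xₜ)(yₜ - p)` is a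
sum of independent terms bounded by `1` whose mean is the pseudo sum `∑ₜ Pₜ(p) f(xₜ)(yₜ - p)`,
so a Bernstein-type bound keeps it within `2√(m L) + 2L` of that mean except with probability
`2e⁻ᴸ`, where `m = ∑ₜ Pₜ(p)` is the expected bucket size. The constraint `x₁ = 1/2` on the
contexts confines `F₁ˡⁱⁿ` to the Euclidean ball of radius `2`, so a volume argument gives an
`ε`-net of `(1 + 4/ε)ᵈ` functions; a union bound over buckets, net points and the constant
function `1` (which controls the bucket size `n` against `m`) costs
`L ≈ log(N/δ) + d log(1/ε)`. On the resulting event an elementary inequality bounds each realized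
bucket error `S²/n` by `O(L) + 8 Q²/m + 4ε²n`, and summing over buckets gives the claim. When
`ε > 1/2` the trivial bound `SMCal ≤ T ≤ 4ε²T` suffices.
-/

open Finset

section ProductProb

variable {ι α : Type*} [Fintype ι] [DecidableEq ι] [Fintype α]

open Classical in
noncomputable def productProb (P : ι → α → ℝ) (E : (ι → α) → Prop) : ℝ :=
  ∑ ω, if E ω then ∏ t, P t (ω t) else 0

theorem productProb_eq_sum (P : ι → α → ℝ) (E : (ι → α) → Prop) [DecidablePred E] :
    productProb P E = ∑ ω, if E ω then ∏ t, P t (ω t) else 0 := by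
  unfold productProb
  congr! 3

variable {P : ι → α → ℝ}

theorem sum_prod_eq_one (hP1 : ∀ t, ∑ i, P t i = 1) : ∑ ω : ι → α, ∏ t, P t (ω t) = 1 := by
  simp [← Fintype.prod_sum, hP1]

theorem productProb_mono (hP : ∀ t i, 0 ≤ P t i) {E F : (ι → α) → Prop} (h : ∀ ω, E ω → F ω) :
    productProb P E ≤ productProb P F := by
  refine sum_le_sum fun ω _ => ?_
  split_ifs with hE hF
  · rfl
  · exact absurd (h ω hE) hF
  · exact prod_nonneg fun t _ => hP t (ω t)
  · rfl

theorem productProb_of_forall (hP1 : ∀ t, ∑ i, P t i = 1) {E : (ι → α) → Prop}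
    (h : ∀ ω, E ω) : productProb P E = 1 := by
  simp only [productProb, h, if_true, sum_prod_eq_one hP1]

theorem productProb_not (hP1 : ∀ t, ∑ i, P t i = 1) (E : (ι → α) → Prop) :
    productProb P (fun ω => ¬ E ω) = 1 - productProb P E := by
  rw [eq_sub_iff_add_eq, productProb, productProb, ← sum_add_distrib, ← sum_prod_eq_one hP1]
  refine sum_congr rfl fun ω _ => ?_
  by_cases h : E ω <;> simp [h]

theorem productProb_exists_le_sum (hP : ∀ t i, 0 ≤ P t i) {J : Type*} (s : Finset J)
    (E : J → (ι → α) → Prop) :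
    productProb P (fun ω => ∃ j ∈ s, E j ω) ≤ ∑ j ∈ s, productProb P (E j) := by
  classical
  simp only [productProb]
  rw [sum_comm]
  refine sum_le_sum fun ω _ => ?_
  have hq := prod_nonneg fun t (_ : t ∈ univ) => hP t (ω t)
  have hterm : ∀ j ∈ s, 0 ≤ if E j ω then ∏ t, P t (ω t) else 0 := fun j _ => by
    split_ifs <;> simp [hq]
  split_ifs with h
  · obtain ⟨j, hj, hE⟩ := h
    simpa [hE] using single_le_sum hterm hj
  · exact sum_nonneg hterm

theorem productProb_or_le (hP : ∀ t i, 0 ≤ P t i) (E F : (ι → α) → Prop) :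
    productProb P (fun ω => E ω ∨ F ω) ≤ productProb P E + productProb P F := by
  rw [productProb, productProb, productProb, ← sum_add_distrib]
  refine sum_le_sum fun ω _ => ?_
  have hq := prod_nonneg fun t (_ : t ∈ univ) => hP t (ω t)
  split_ifs <;> simp_all

theorem exp_le_one_add_add_sq {x : ℝ} (hx : |x| ≤ 1) : Real.exp x ≤ 1 + x + x ^ 2 := by
  have h := Real.exp_bound hx (n := 2) (by norm_num)
  norm_num [sum_range_succ, Nat.factorial, sq_abs] at h
  nlinarith [abs_le.mp h, sq_nonneg x]

theorem sum_mul_exp_le {q : α → ℝ} (hq : ∀ i, 0 ≤ q i) (hq1 : ∑ i, q i = 1) {X : α → ℝ}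
    (hX : ∀ i, |X i| ≤ 1) {l : ℝ} (hl : |l| ≤ 1) :
    ∑ i, q i * Real.exp (l * X i) ≤
      Real.exp (l * ∑ i, q i * X i + l ^ 2 * ∑ i, q i * X i ^ 2) := calc
  _ ≤ ∑ i, q i * (1 + l * X i + (l * X i) ^ 2) := by
      refine sum_le_sum fun i _ => mul_le_mul_of_nonneg_left (exp_le_one_add_add_sq ?_) (hq i)
      rw [abs_mul]
      exact mul_le_one₀ hl (abs_nonneg _) (hX i)
  _ = ∑ i, q i + l * ∑ i, q i * X i + l ^ 2 * ∑ i, q i * X i ^ 2 := by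
      simp only [mul_sum, ← sum_add_distrib]
      exact sum_congr rfl fun i _ => by ring
  _ = l * ∑ i, q i * X i + l ^ 2 * ∑ i, q i * X i ^ 2 + 1 := by rw [hq1]; ring
  _ ≤ _ := Real.add_one_le_exp _

theorem sum_prod_mul_exp_sum (P : ι → α → ℝ) (g : ι → α → ℝ) :
    ∑ ω : ι → α, (∏ t, P t (ω t)) * Real.exp (∑ t, g t (ω t)) =
      ∏ t, ∑ i, P t i * Real.exp (g t i) := by
  rw [Fintype.prod_sum]
  exact sum_congr rfl fun ω _ => by rw [Real.exp_sum, prod_mul_distrib]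

theorem productProb_le_exp_mul (hP : ∀ t i, 0 ≤ P t i) (f : (ι → α) → ℝ) (s : ℝ) {l : ℝ}
    (hl : 0 ≤ l) :
    productProb P (fun ω => s ≤ f ω) ≤
      Real.exp (-(l * s)) * ∑ ω, (∏ t, P t (ω t)) * Real.exp (l * f ω) := by
  rw [productProb, mul_sum]
  refine sum_le_sum fun ω _ => ?_
  have hq := prod_nonneg fun t (_ : t ∈ univ) => hP t (ω t)
  split_ifs with h
  · rw [mul_left_comm, ← Real.exp_add]
    refine le_mul_of_one_le_right hq (Real.one_le_exp ?_)
    nlinarith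
  · positivity

theorem exists_chernoff_parameter {V L : ℝ} (hV : 0 ≤ V) (hL : 0 < L) :
    ∃ l, 0 ≤ l ∧ l ≤ 1 ∧ l ^ 2 * V - l * (2 * √(V * L) + 2 * L) ≤ -L := by
  rcases le_or_gt V L with hVL | hLV
  · exact ⟨1, zero_le_one, le_rfl, by nlinarith [Real.sqrt_nonneg (V * L)]⟩
  · have hV0 : 0 < V := hL.trans hLV
    have hsq : √(L / V) ^ 2 = L / V := Real.sq_sqrt (by positivity)
    have hprod : √(L / V) * √(V * L) = L := by
      rw [← Real.sqrt_mul (by positivity), show L / V * (V * L) = L ^ 2 by field_simp,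
        Real.sqrt_sq hL.le]
    refine ⟨√(L / V), Real.sqrt_nonneg _, ?_, ?_⟩
    · exact Real.sqrt_le_one.mpr ((div_le_one hV0).mpr hLV.le)
    · have : L / V * V = L := div_mul_cancel₀ _ hV0.ne'
      nlinarith [Real.sqrt_nonneg (L / V)]

theorem productProb_bernstein (hP : ∀ t i, 0 ≤ P t i) (hP1 : ∀ t, ∑ i, P t i = 1)
    {X : ι → α → ℝ} (hX : ∀ t i, |X t i| ≤ 1) {L : ℝ} (hL : 0 < L) :
    productProb P (fun ω => 2 * √((∑ t, ∑ i, P t i * X t i ^ 2) * L) + 2 * L ≤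
      ∑ t, (X t (ω t) - ∑ i, P t i * X t i)) ≤ Real.exp (-L) := by
  obtain ⟨l, hl0, hl1, hl⟩ := exists_chernoff_parameter (V := ∑ t, ∑ i, P t i * X t i ^ 2)
    (sum_nonneg fun t _ => sum_nonneg fun i _ => mul_nonneg (hP t i) (sq_nonneg (X t i))) hL
  refine (productProb_le_exp_mul hP _ _ hl0).trans ?_
  have hfactor : ∀ t, ∑ i, P t i * Real.exp (l * (X t i - ∑ j, P t j * X t j)) ≤
      Real.exp (l ^ 2 * ∑ i, P t i * X t i ^ 2) := fun t => calc
    _ = Real.exp (-(l * ∑ j, P t j * X t j)) * ∑ i, P t i * Real.exp (l * X t i) := by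
        rw [mul_sum]
        refine sum_congr rfl fun i _ => ?_
        rw [mul_left_comm, ← Real.exp_add]
        ring_nf
    _ ≤ Real.exp (-(l * ∑ j, P t j * X t j)) *
          Real.exp (l * ∑ i, P t i * X t i + l ^ 2 * ∑ i, P t i * X t i ^ 2) := by
        gcongr
        exact sum_mul_exp_le (hP t) (hP1 t) (hX t) (abs_le.mpr ⟨by linarith, hl1⟩)
    _ = _ := by rw [← Real.exp_add]; ring_nf
  set s := 2 * √((∑ t, ∑ i, P t i * X t i ^ 2) * L) + 2 * L
  calc _ = Real.exp (-(l * s)) *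
        ∏ t, ∑ i, P t i * Real.exp (l * (X t i - ∑ j, P t j * X t j)) := by
        rw [← sum_prod_mul_exp_sum]
        simp only [mul_sum]
    _ ≤ Real.exp (-(l * s)) * ∏ t, Real.exp (l ^ 2 * ∑ i, P t i * X t i ^ 2) := by
        gcongr with t
        · exact fun t _ => sum_nonneg fun i _ => mul_nonneg (hP t i) (Real.exp_nonneg _)
        · exact hfactor t
    _ ≤ Real.exp (-L) := by
        rw [← Real.exp_sum, ← mul_sum, ← Real.exp_add, Real.exp_le_exp]
        linarith

theorem productProb_abs_bernstein (hP : ∀ t i, 0 ≤ P t i) (hP1 : ∀ t, ∑ i, P t i = 1)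
    {X : ι → α → ℝ} (hX : ∀ t i, |X t i| ≤ 1) {L : ℝ} (hL : 0 < L) :
    productProb P (fun ω => 2 * √((∑ t, ∑ i, P t i * X t i ^ 2) * L) + 2 * L ≤
      |∑ t, (X t (ω t) - ∑ i, P t i * X t i)|) ≤ 2 * Real.exp (-L) := by
  classical
  have hnegX : ∀ t i, |(-X) t i| ≤ 1 := fun t i => by simpa using hX t i
  have hneg := productProb_bernstein hP hP1 hnegX hL
  simp only [Pi.neg_apply, neg_sq, mul_neg, sum_neg_distrib, sub_neg_eq_add, neg_add_eq_sub]
    at hneg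
  calc _ ≤ productProb P _ := productProb_mono hP fun ω h => (le_abs.mp h).imp_right
        fun h => by simpa only [← sum_neg_distrib, neg_sub] using h
    _ ≤ _ := productProb_or_le hP _ _
    _ ≤ _ := by linarith [productProb_bernstein hP hP1 hX hL]

end ProductProb

section Net
open Metric MeasureTheory Module
open scoped NNReal ENNReal

variable {E : Type*} [NormedAddCommGroup E] [NormedSpace ℝ E] [FiniteDimensional ℝ E]

theorem card_le_of_isSeparated {C : Finset E} {R : ℝ} (hR : 0 ≤ R) {ε : ℝ≥0} (hε : 0 < ε)
    (hC : ↑C ⊆ closedBall (0 : E) R) (hsep : IsSeparated ε (C : Set E)) :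
    (C.card : ℝ) ≤ (1 + 2 * R / ε) ^ finrank ℝ E := by
  let _ : MeasurableSpace E := borel E
  have _ : BorelSpace E := ⟨rfl⟩
  set μ : Measure E := Measure.addHaar
  have hr : (0 : ℝ) < ε / 2 := by positivity
  have hdisj : (C : Set E).PairwiseDisjoint fun x => ball x (ε / 2) := fun x hx y hy hxy => by
    refine ball_disjoint_ball ?_
    have : (ε : ℝ≥0∞) < edist x y := hsep hx hy hxy
    rw [edist_nndist, ENNReal.coe_lt_coe, ← NNReal.coe_lt_coe, coe_nndist] at this
    linarith
  have hsub : ⋃ x ∈ C, ball x (ε / 2) ⊆ ball (0 : E) (R + ε / 2) := by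
    refine Set.iUnion₂_subset fun x hx => ball_subset_ball' ?_
    have := mem_closedBall.mp (hC hx)
    linarith
  have hvol : ∑ x ∈ C, μ (ball x (ε / 2)) ≤ μ (ball (0 : E) (R + ε / 2)) := by
    rw [← measure_biUnion_finset hdisj fun _ _ => measurableSet_ball]
    exact measure_mono hsub
  simp only [Measure.addHaar_ball_of_pos μ _ hr,
    Measure.addHaar_ball_of_pos μ _ (by linarith : 0 < R + ε / 2), sum_const, nsmul_eq_mul,
    ← mul_assoc] at hvol
  have hvol' := (ENNReal.mul_le_mul_iff_left (measure_ball_pos μ (0 : E) one_pos).ne'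
    measure_ball_lt_top.ne).mp hvol
  rw [← ENNReal.ofReal_natCast, ← ENNReal.ofReal_mul (by positivity),
    ENNReal.ofReal_le_ofReal_iff (by positivity), ← le_div_iff₀ (by positivity),
    ← div_pow] at hvol'
  refine hvol'.trans_eq ?_
  congr 1
  field_simp
  ring

theorem packingNumber_le_of_subset_closedBall {A : Set E} {R : ℝ} (hR : 0 ≤ R) {ε : ℝ≥0}
    (hε : 0 < ε) (hA : A ⊆ closedBall (0 : E) R) :
    packingNumber ε A ≤ ⌊(1 + 2 * R / ε) ^ finrank ℝ E⌋₊ := by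
  have hfinset : ∀ C : Finset E, ↑C ⊆ A → IsSeparated ε (C : Set E) →
      C.card ≤ ⌊(1 + 2 * R / ε) ^ finrank ℝ E⌋₊ := fun C hCA hsep =>
    Nat.le_floor (card_le_of_isSeparated hR hε (hCA.trans hA) hsep)
  refine iSup_le fun C => iSup_le fun hCA => iSup_le fun hsep => ?_
  rcases C.finite_or_infinite with hfin | hinf
  · rw [hfin.encard_eq_coe_toFinset_card, Nat.cast_le]
    exact hfinset _ (by simpa using hCA) (by simpa using hsep)
  · obtain ⟨t, htC, hcard⟩ := hinf.exists_subset_card_eq (⌊(1 + 2 * R / ε) ^ finrank ℝ E⌋₊ + 1)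
    have := hfinset t (htC.trans hCA) (hsep.subset htC)
    omega

theorem exists_finset_isCover_card_le {A : Set E} {R : ℝ} (hR : 0 ≤ R) {ε : ℝ≥0} (hε : 0 < ε)
    (hA : A ⊆ closedBall (0 : E) R) :
    ∃ C : Finset E, ↑C ⊆ A ∧ IsCover ε A C ∧ (C.card : ℝ) ≤ (1 + 2 * R / ε) ^ finrank ℝ E := by
  have hpack := packingNumber_le_of_subset_closedBall hR hε hA
  have hfinite : packingNumber ε A ≠ ⊤ := ne_top_of_le_ne_top (by simp) hpack
  have hM : (maximalSeparatedSet ε A).Finite := Set.encard_ne_top_iff.mp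
    (by rwa [encard_maximalSeparatedSet hfinite])
  refine ⟨hM.toFinset, by simpa using maximalSeparatedSet_subset,
    by simpa using isCover_maximalSeparatedSet hfinite, ?_⟩
  have : hM.toFinset.card ≤ ⌊(1 + 2 * R / ε) ^ finrank ℝ E⌋₊ := by
    rw [← Nat.cast_le (α := ℕ∞), ← hM.encard_eq_coe_toFinset_card,
      encard_maximalSeparatedSet hfinite]
    exact hpack
  exact (Nat.cast_le.mpr this).trans (Nat.floor_le (by positivity))

end Net

open scoped RealInnerProductSpace

theorem norm_le_two_of_abs_inner_le_one {F : Type*} [NormedAddCommGroup F]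
    [InnerProductSpace ℝ F] {e θ : F} (he : ‖e‖ = 1) (hθ : ∀ v, ‖v‖ ≤ 1 → ⟪v, e⟫ = 1 / 2 → |⟪θ, v⟫| ≤ 1) : ‖θ‖ ≤ 2 := by
  set c := ⟪θ, e⟫
  set w := θ - c • e
  have hwe : ⟪w, e⟫ = 0 := by simp [w, inner_sub_left, inner_smul_left, he, c]
  have hθw : ⟪θ, w⟫ = ‖w‖ ^ 2 := by
    rw [← real_inner_self_eq_norm_sq, show θ = w + c • e by simp [w], inner_add_left,
      inner_smul_left, real_inner_comm w e, hwe]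
    simp
  have hrw : (2 * ‖w‖)⁻¹ * ‖w‖ ≤ 1 / 2 := by
    rcases (norm_nonneg w).eq_or_lt with h | h
    · simp [← h]
    · rw [mul_inv, mul_assoc, inv_mul_cancel₀ h.ne']; norm_num
  have key : ∀ σ : ℝ, |σ| = 1 → |c / 2 + σ * (‖w‖ / 2)| ≤ 1 := fun σ hσ => by
    set v := (1 / 2 : ℝ) • e + (σ * (2 * ‖w‖)⁻¹) • w
    have hv : ‖v‖ ≤ 1 := calc
      ‖v‖ ≤ 1 / 2 + |σ| * ((2 * ‖w‖)⁻¹ * ‖w‖) := by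
        refine (norm_add_le _ _).trans ?_
        simp [norm_smul, he, mul_assoc]
      _ ≤ 1 := by rw [hσ]; linarith
    have hve : ⟪v, e⟫ = 1 / 2 := by simp [v, inner_add_left, inner_smul_left, he, hwe]
    have hθv : ⟪θ, v⟫ = c / 2 + σ * (‖w‖ / 2) := by
      rw [inner_add_right, inner_smul_right, inner_smul_right, hθw]
      rcases (norm_nonneg w).eq_or_lt with h | h
      · simp [← h]; ring
      · field_simp
        rfl
    simpa [hθv] using hθ v hv hve
  have h₁ := abs_le.mp (key 1 (by norm_num))
  have h₂ := abs_le.mp (key (-1) (by norm_num))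
  calc ‖θ‖ = ‖c • e + w‖ := by simp [w]
    _ ≤ |c| + ‖w‖ := by simpa [norm_smul, he] using norm_add_le (c • e) w
    _ ≤ 2 := by cases abs_cases c <;> linarith

/-- `F₁ˡⁱⁿ`, as the set of parameter vectors `θ` of the functions `x ↦ ⟨θ, x⟩`. -/
def linearClass {d : ℕ} (hd : 0 < d) : Set (Fin d → ℝ) :=
  {θ | ∀ v : Fin d → ℝ, √(∑ i, v i ^ 2) ≤ 1 → v ⟨0, hd⟩ = 1 / 2 → |∑ i, θ i * v i| ≤ 1}

open Metric in
theorem exists_linearClass_net {d : ℕ} (hd : 0 < d) {ε : ℝ} (hε : 0 < ε) :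
    ∃ S : Finset (Fin d → ℝ), ↑S ⊆ linearClass hd ∧
      (∀ θ ∈ linearClass hd, ∃ ν ∈ S, ∀ v : Fin d → ℝ, √(∑ i, v i ^ 2) ≤ 1 →
        |∑ i, θ i * v i - ∑ i, ν i * v i| ≤ ε) ∧
      (S.card : ℝ) ≤ (1 + 4 / ε) ^ d := by
  have hnorm : ∀ v : Fin d → ℝ, ‖WithLp.toLp 2 v‖ = √(∑ i, v i ^ 2) := fun v => by
    simp [EuclideanSpace.norm_eq]
  have hinner : ∀ θ v : Fin d → ℝ, ⟪WithLp.toLp 2 θ, WithLp.toLp 2 v⟫ = ∑ i, θ i * v i :=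
    fun θ v => by simp [EuclideanSpace.inner_toLp_toLp, dotProduct, mul_comm]
  set e : EuclideanSpace ℝ (Fin d) := EuclideanSpace.single ⟨0, hd⟩ 1
  have hA : WithLp.toLp 2 '' linearClass hd ⊆ closedBall 0 2 := by
    rintro _ ⟨θ, hθ, rfl⟩
    refine mem_closedBall_zero_iff.mpr (norm_le_two_of_abs_inner_le_one (e := e) (by simp [e])
      fun v hv hve => ?_)
    rw [← WithLp.toLp_ofLp 2 v, hinner]
    exact hθ v.ofLp (by simpa [hnorm] using hv)
      (by simpa [e, EuclideanSpace.inner_single_right] using hve)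
  obtain ⟨C, hCA, hcover, hcard⟩ :=
    exists_finset_isCover_card_le zero_le_two (Real.toNNReal_pos.mpr hε) hA
  refine ⟨C.image WithLp.ofLp, ?_, ?_, ?_⟩
  · intro ν hν
    obtain ⟨c, hc, rfl⟩ := mem_image.mp hν
    obtain ⟨θ, hθ, rfl⟩ := hCA hc
    exact hθ
  · intro θ hθ
    obtain ⟨c, hc, hθc⟩ := hcover (Set.mem_image_of_mem _ hθ)
    refine ⟨c.ofLp, mem_image_of_mem _ hc, fun v hv => ?_⟩
    change edist _ _ ≤ _ at hθc
    rw [edist_le_coe, ← NNReal.coe_le_coe, coe_nndist, Real.coe_toNNReal _ hε.le,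
      dist_eq_norm] at hθc
    calc |∑ i, θ i * v i - ∑ i, c.ofLp i * v i|
        = |⟪WithLp.toLp 2 θ - c, WithLp.toLp 2 v⟫| := by
          rw [inner_sub_left, hinner, ← hinner c.ofLp]
      _ ≤ ‖WithLp.toLp 2 θ - c‖ * ‖WithLp.toLp 2 v‖ := abs_real_inner_le_norm _ _
      _ ≤ ε * 1 := by gcongr; rwa [hnorm]
      _ = ε := mul_one ε
  · calc ((C.image WithLp.ofLp).card : ℝ) ≤ C.card := by exact_mod_cast card_image_le
      _ ≤ _ := by
        rw [Real.coe_toNNReal _ hε.le, finrank_euclideanSpace_fin] at hcard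
        linarith

theorem abs_sub_div_le_one {N : ℕ} {y : ℝ} (hy : y = 0 ∨ y = 1) (p : Fin (N + 1)) :
    |y - ((p : ℕ) : ℝ) / N| ≤ 1 := by
  have h₀ : 0 ≤ ((p : ℕ) : ℝ) / N := by positivity
  have h₁ : ((p : ℕ) : ℝ) / N ≤ 1 := div_le_one_of_le₀ (by exact_mod_cast p.is_le) (by positivity)
  rcases hy with rfl | rfl <;> rw [abs_le] <;> constructor <;> linarith

section LinearResidual

variable {d T N : ℕ} {x : Fin T → Fin d → ℝ} {y : Fin T → ℝ}

noncomputable def linearResidual (x : Fin T → Fin d → ℝ) (y : Fin T → ℝ) (p : Fin (N + 1))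
    (θ : Fin d → ℝ) (t : Fin T) : ℝ :=
  (∑ i, θ i * x t i) * (y t - ((p : ℕ) : ℝ) / N)

theorem abs_linearResidual_le_one (hd : 0 < d)
    (hx : ∀ t, √(∑ i, x t i ^ 2) ≤ 1 ∧ x t ⟨0, hd⟩ = 1 / 2) (hy : ∀ t, y t = 0 ∨ y t = 1)
    (p : Fin (N + 1)) : ∀ θ ∈ linearClass hd, ∀ t, |linearResidual x y p θ t| ≤ 1 :=
  fun θ hθ t => by
    rw [linearResidual, abs_mul]
    exact mul_le_one₀ (hθ _ (hx t).1 (hx t).2) (abs_nonneg _) (abs_sub_div_le_one (hy t) p)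

theorem exists_linearResidual_net (hd : 0 < d) {ε : ℝ} (hε : 0 < ε)
    (hx : ∀ t, √(∑ i, x t i ^ 2) ≤ 1) (hy : ∀ t, y t = 0 ∨ y t = 1) :
    ∃ S : Finset (Fin d → ℝ), ↑S ⊆ linearClass hd ∧
      (∀ θ ∈ linearClass hd, ∃ ν ∈ S, ∀ (p : Fin (N + 1)) t,
        |linearResidual x y p θ t - linearResidual x y p ν t| ≤ ε) ∧
      (S.card : ℝ) ≤ (1 + 4 / ε) ^ d := by
  obtain ⟨S, hSF, hnet, hcard⟩ := exists_linearClass_net hd hε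
  refine ⟨S, hSF, fun θ hθ => (hnet θ hθ).imp fun ν ⟨hν, hθν⟩ => ⟨hν, fun p t => ?_⟩, hcard⟩
  rw [linearResidual, linearResidual, ← sub_mul, abs_mul]
  exact (mul_le_mul (hθν _ (hx t)) (abs_sub_div_le_one (hy t) p) (abs_nonneg _) hε.le).trans_eq
    (mul_one ε)

end LinearResidual

/-- `S`, `Q` are the realized and pseudo sums of one bucket, `n`, `m` its realized and expected
sizes, and `R` its pseudo error; the hypotheses are the deviation bounds of the good event. -/
theorem sq_le_of_abs_sub_le {S Q n m L R e : ℝ} (hL : 0 ≤ L) (hm : 0 ≤ m) (hR : 0 ≤ R)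
    (hS : |S| ≤ n) (hQ : Q ^ 2 ≤ m * R)
    (hSQ : |S - Q| ≤ 2 * √(m * L) + 2 * L + e * n) (hnm : |n - m| ≤ 2 * √(m * L) + 2 * L) :
    S ^ 2 ≤ (100 * L + 8 * R + 4 * e ^ 2 * n) * n := by
  have hn : 0 ≤ n := (abs_nonneg S).trans hS
  have hSn : S ^ 2 ≤ n ^ 2 := sq_le_sq' (abs_le.mp hS).1 (abs_le.mp hS).2
  rcases le_or_gt n (100 * L) with hsmall | hlarge
  · nlinarith [mul_nonneg hR hn, mul_nonneg (mul_nonneg (sq_nonneg e) hn) hn]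
  set w := √(m * L)
  have hw : 0 ≤ w := Real.sqrt_nonneg _
  have hw2 : w ^ 2 = m * L := Real.sq_sqrt (mul_nonneg hm hL)
  -- `L < n / 100` forces `m ≤ 2 n` through the deviation bound on `n - m`
  have hmn : m ≤ 2 * n := by nlinarith [sq_nonneg (w - m / 20), (abs_le.mp hnm).1]
  have hS' : |S| ≤ |Q| + 2 * w + 2 * L + e * n := by
    have := abs_sub_abs_le_abs_sub S Q
    linarith
  have hsq : S ^ 2 ≤ (|Q| + 2 * w + 2 * L + e * n) ^ 2 := by
    rw [← sq_abs S]
    exact pow_le_pow_left₀ (abs_nonneg S) hS' 2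
  nlinarith [sq_abs Q, sq_nonneg (|Q| - 2 * w), sq_nonneg (|Q| - 2 * L), sq_nonneg (|Q| - e * n),
    sq_nonneg (2 * w - 2 * L), sq_nonneg (2 * w - e * n), sq_nonneg (2 * L - e * n)]

section SwapError

variable {ι Θ : Type*} [Fintype ι]

/-- With `w t = 1[pₜ = p]` this is the bucket-`p` term of `SMCal`, with `w t = Pₜ(p)` that of
`PSMCal`, where `a θ t` is the summand `f_θ(xₜ)(yₜ - p)`. -/
noncomputable def weightedSwapError (w : ι → ℝ) (F : Set Θ) (a : Θ → ι → ℝ) : ℝ :=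
  (∑ t, w t) * sSup {r | ∃ θ ∈ F, r = ((∑ t, w t * a θ t) / ∑ t, w t) ^ 2}

theorem abs_sum_mul_le_sum {w a : ι → ℝ} (hw : ∀ t, 0 ≤ w t) (ha : ∀ t, |a t| ≤ 1) :
    |∑ t, w t * a t| ≤ ∑ t, w t :=
  (abs_sum_le_sum_abs _ _).trans <| sum_le_sum fun t _ => by
    rw [abs_mul, abs_of_nonneg (hw t)]
    exact mul_le_of_le_one_right (hw t) (ha t)

theorem div_sq_le_one {x y : ℝ} (h : |x| ≤ y) : (x / y) ^ 2 ≤ 1 := by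
  rw [div_pow]
  exact div_le_one_of_le₀ (sq_le_sq' (abs_le.mp h).1 (abs_le.mp h).2) (sq_nonneg y)

variable {w : ι → ℝ} {F : Set Θ} {a : Θ → ι → ℝ}

theorem bddAbove_swapSet (hw : ∀ t, 0 ≤ w t) (ha : ∀ θ ∈ F, ∀ t, |a θ t| ≤ 1) :
    BddAbove {r | ∃ θ ∈ F, r = ((∑ t, w t * a θ t) / ∑ t, w t) ^ 2} := by
  refine ⟨1, ?_⟩
  rintro _ ⟨θ, hθ, rfl⟩
  exact div_sq_le_one (abs_sum_mul_le_sum hw (ha θ hθ))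

theorem weightedSwapError_nonneg (hw : ∀ t, 0 ≤ w t) : 0 ≤ weightedSwapError w F a :=
  mul_nonneg (sum_nonneg fun t _ => hw t) (Real.sSup_nonneg fun _ ⟨_, _, hr⟩ => hr ▸ sq_nonneg _)

theorem weightedSwapError_le_sum (hw : ∀ t, 0 ≤ w t) (ha : ∀ θ ∈ F, ∀ t, |a θ t| ≤ 1) :
    weightedSwapError w F a ≤ ∑ t, w t := by
  refine mul_le_of_le_one_right (sum_nonneg fun t _ => hw t) (Real.sSup_le ?_ zero_le_one)
  rintro _ ⟨θ, hθ, rfl⟩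
  exact div_sq_le_one (abs_sum_mul_le_sum hw (ha θ hθ))

theorem sq_le_mul_weightedSwapError (hw : ∀ t, 0 ≤ w t) (ha : ∀ θ ∈ F, ∀ t, |a θ t| ≤ 1)
    {θ : Θ} (hθ : θ ∈ F) : (∑ t, w t * a θ t) ^ 2 ≤ (∑ t, w t) * weightedSwapError w F a := by
  have hle : ((∑ t, w t * a θ t) / ∑ t, w t) ^ 2 ≤
      sSup {r | ∃ θ ∈ F, r = ((∑ t, w t * a θ t) / ∑ t, w t) ^ 2} :=
    le_csSup (bddAbove_swapSet hw ha) ⟨θ, hθ, rfl⟩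
  rcases (sum_nonneg fun t _ => hw t : 0 ≤ ∑ t, w t).eq_or_lt with h0 | hpos
  · have := abs_sum_mul_le_sum hw (ha θ hθ)
    rw [← h0] at this
    rw [abs_nonpos_iff.mp this, ← h0]
    simp
  · rw [weightedSwapError, ← mul_assoc, ← sq]
    rwa [div_pow, div_le_iff₀ (by positivity), mul_comm] at hle

theorem weightedSwapError_le_of_deviation {v : ι → ℝ} (hw : ∀ t, 0 ≤ w t) (hv : ∀ t, 0 ≤ v t)
    (ha : ∀ θ ∈ F, ∀ t, |a θ t| ≤ 1) {S : Finset Θ} (hSF : ↑S ⊆ F) {e L : ℝ} (hL : 0 ≤ L)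
    (hcover : ∀ θ ∈ F, ∃ ν ∈ S, ∀ t, |a θ t - a ν t| ≤ e)
    (hdev : ∀ ν ∈ S, |∑ t, w t * a ν t - ∑ t, v t * a ν t| ≤ 2 * √((∑ t, v t) * L) + 2 * L)
    (hdev₁ : |∑ t, w t - ∑ t, v t| ≤ 2 * √((∑ t, v t) * L) + 2 * L) :
    weightedSwapError w F a ≤ 100 * L + 8 * weightedSwapError v F a + 4 * e ^ 2 * ∑ t, w t := by
  have hn : 0 ≤ ∑ t, w t := sum_nonneg fun t _ => hw t
  have hPS := weightedSwapError_nonneg (F := F) (a := a) hv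
  rcases hn.eq_or_lt with h0 | hpos
  · rw [weightedSwapError, ← h0, zero_mul]
    positivity
  have hsq : ∀ θ ∈ F, (∑ t, w t * a θ t) ^ 2 ≤
      (100 * L + 8 * weightedSwapError v F a + 4 * e ^ 2 * ∑ t, w t) * ∑ t, w t := by
    intro θ hθ
    obtain ⟨ν, hν, hνθ⟩ := hcover θ hθ
    have hSν : |∑ t, w t * a θ t - ∑ t, w t * a ν t| ≤ e * ∑ t, w t := by
      rw [← sum_sub_distrib, mul_sum]
      refine (abs_sum_le_sum_abs _ _).trans (sum_le_sum fun t _ => ?_)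
      rw [← mul_sub, abs_mul, abs_of_nonneg (hw t), mul_comm]
      exact mul_le_mul_of_nonneg_right (hνθ t) (hw t)
    refine sq_le_of_abs_sub_le hL (sum_nonneg fun t _ => hv t) hPS
      (abs_sum_mul_le_sum hw (ha θ hθ)) (sq_le_mul_weightedSwapError hv ha (hSF hν)) ?_ hdev₁
    have := abs_sub_le (∑ t, w t * a θ t) (∑ t, w t * a ν t) (∑ t, v t * a ν t)
    linarith [hdev ν hν]
  calc weightedSwapError w F a
      ≤ (∑ t, w t) * ((100 * L + 8 * weightedSwapError v F a + 4 * e ^ 2 * ∑ t, w t) /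
          ∑ t, w t) := by
        refine mul_le_mul_of_nonneg_left (Real.sSup_le ?_ (by positivity)) hn
        rintro _ ⟨θ, hθ, rfl⟩
        rw [div_pow, div_le_div_iff₀ (by positivity) hpos]
        nlinarith [hsq θ hθ]
    _ = _ := mul_div_cancel₀ _ hpos.ne'

end SwapError

section Multicalibration

variable {ι α Θ : Type*} [Fintype ι] [DecidableEq ι] [Fintype α] [DecidableEq α]
  {P : ι → α → ℝ}

theorem productProb_bucket_deviation_le (hP : ∀ t i, 0 ≤ P t i) (hP1 : ∀ t, ∑ i, P t i = 1)
    (p : α) {b : ι → ℝ} (hb : ∀ t, |b t| ≤ 1) {L : ℝ} (hL : 0 < L) :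
    productProb P (fun ω => 2 * √((∑ t, P t p) * L) + 2 * L <
      |∑ t, (if ω t = p then 1 else 0) * b t - ∑ t, P t p * b t|) ≤ 2 * Real.exp (-L) := by
  classical
  set X : ι → α → ℝ := fun t i => (if i = p then 1 else 0) * b t
  have hX : ∀ t i, |X t i| ≤ 1 := fun t i => by
    by_cases h : i = p <;> simp [X, h, hb t]
  have hmean : ∀ t, ∑ i, P t i * X t i = P t p * b t := fun t => by simp [X]
  have hvar : ∑ t, ∑ i, P t i * X t i ^ 2 ≤ ∑ t, P t p := by
    refine sum_le_sum fun t _ => ?_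
    simp only [X, ite_pow, zero_pow two_ne_zero, ite_mul, one_mul, zero_mul,
      mul_ite, mul_zero, sum_ite_eq', mem_univ, if_true]
    exact mul_le_of_le_one_right (hP t p) (by nlinarith [abs_le.mp (hb t)])
  refine (productProb_mono hP fun ω h => ?_).trans (productProb_abs_bernstein hP hP1 hX hL)
  simp only [hmean, sum_sub_distrib]
  have := Real.sqrt_le_sqrt (mul_le_mul_of_nonneg_right hvar hL.le)
  linarith

omit [DecidableEq ι] in
theorem sum_boole_eq_card (ω : ι → α) :
    ∑ p, ∑ t, (if ω t = p then (1 : ℝ) else 0) = Fintype.card ι := by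
  rw [sum_comm]
  simp

theorem productProb_exists_bucket_deviation_le (hP : ∀ t i, 0 ≤ P t i)
    (hP1 : ∀ t, ∑ i, P t i = 1) {A : α → Finset (ι → ℝ)} (hA : ∀ p, ∀ b ∈ A p, ∀ t, |b t| ≤ 1)
    {k : ℕ} (hk : ∀ p, (A p).card ≤ k) {L : ℝ} (hL : 0 < L) :
    productProb P (fun ω => ∃ p ∈ univ, ∃ b ∈ A p, 2 * √((∑ t, P t p) * L) + 2 * L <
      |∑ t, (if ω t = p then 1 else 0) * b t - ∑ t, P t p * b t|) ≤
      2 * Fintype.card α * k * Real.exp (-L) := calc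
  _ ≤ ∑ p, ∑ b ∈ A p, productProb P (fun ω => 2 * √((∑ t, P t p) * L) + 2 * L <
      |∑ t, (if ω t = p then 1 else 0) * b t - ∑ t, P t p * b t|) :=
    (productProb_exists_le_sum hP _ _).trans
      (sum_le_sum fun p _ => productProb_exists_le_sum hP _ _)
  _ ≤ ∑ _p : α, k * (2 * Real.exp (-L)) := by
    refine sum_le_sum fun p _ => (sum_le_sum fun b hb =>
      productProb_bucket_deviation_le hP hP1 p (hA p b hb) hL).trans ?_
    rw [sum_const, nsmul_eq_mul]
    gcongr
    exact_mod_cast hk p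
  _ = 2 * Fintype.card α * k * Real.exp (-L) := by simp; ring

theorem productProb_sum_weightedSwapError_le (hP : ∀ t i, 0 ≤ P t i)
    (hP1 : ∀ t, ∑ i, P t i = 1) {F : Set Θ} {a : α → Θ → ι → ℝ}
    (ha : ∀ p, ∀ θ ∈ F, ∀ t, |a p θ t| ≤ 1) {S : Finset Θ} (hSF : ↑S ⊆ F) {e : ℝ}
    (hcover : ∀ θ ∈ F, ∃ ν ∈ S, ∀ p t, |a p θ t - a p ν t| ≤ e) {L : ℝ} (hL : 0 < L) :
    1 - 2 * Fintype.card α * (S.card + 1) * Real.exp (-L) ≤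
      productProb P (fun ω => ∑ p, weightedSwapError (fun t => if ω t = p then 1 else 0) F (a p) ≤
        100 * Fintype.card α * L + 8 * ∑ p, weightedSwapError (fun t => P t p) F (a p) +
          4 * e ^ 2 * Fintype.card ι) := by
  classical
  set A : α → Finset (ι → ℝ) := fun p => insert (fun _ => 1) (S.image (a p))
  have hA : ∀ p, ∀ b ∈ A p, ∀ t, |b t| ≤ 1 := by
    intro p b hb t
    rcases mem_insert.mp hb with rfl | hb
    · simp
    · obtain ⟨ν, hν, rfl⟩ := mem_image.mp hb
      exact ha p ν (hSF hν) t
  have hbad := productProb_exists_bucket_deviation_le hP hP1 hA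
    (fun p => (card_insert_le _ _).trans (Nat.succ_le_succ card_image_le)) hL
  push_cast at hbad
  rw [← sub_le_sub_iff_left 1, ← productProb_not hP1] at hbad
  refine hbad.trans (productProb_mono hP fun ω hgood => ?_)
  simp only [not_exists, not_and, not_lt] at hgood
  calc _ ≤ ∑ p, (100 * L + 8 * weightedSwapError (fun t => P t p) F (a p) +
        4 * e ^ 2 * ∑ t, if ω t = p then 1 else 0) := by
        refine sum_le_sum fun p _ => weightedSwapError_le_of_deviation
          (fun t => by positivity) (fun t => hP t p) (ha p) hSF hL.le
          (fun θ hθ => (hcover θ hθ).imp fun ν hν => ⟨hν.1, hν.2 p⟩)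
          (fun ν hν => hgood p (mem_univ p) _ (mem_insert_of_mem (mem_image_of_mem _ hν))) ?_
        simpa using hgood p (mem_univ p) _ (mem_insert_self _ _)
    _ = _ := by simp only [sum_add_distrib, ← mul_sum, sum_boole_eq_card, sum_const]; simp; ring

omit [DecidableEq ι] in
theorem sum_weightedSwapError_boole_le_card {F : Set Θ} {a : α → Θ → ι → ℝ}
    (ha : ∀ p, ∀ θ ∈ F, ∀ t, |a p θ t| ≤ 1) (ω : ι → α) :
    ∑ p, weightedSwapError (fun t => if ω t = p then 1 else 0) F (a p) ≤ Fintype.card ι := by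
  rw [← sum_boole_eq_card ω]
  exact sum_le_sum fun p _ => weightedSwapError_le_sum (fun t => by positivity) (ha p)

end Multicalibration

theorem add_one_mul_log_le {n ε δ k : ℝ} {d : ℕ} (hn : 1 ≤ n) (hd : 0 < d) (hε : 0 < ε)
    (hε2 : ε ≤ 1 / 2) (hδ : 0 < δ) (hδ1 : δ ≤ 1) (hk0 : 0 ≤ k) (hk : k ≤ (1 + 4 / ε) ^ d) :
    (n + 1) * Real.log (2 * (n + 1) * (k + 1) / δ) ≤
      2 * n * Real.log (n / δ) + 14 * n * d * Real.log (1 / ε) := by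
  set q := 1 / ε
  have hq : 2 ≤ q := by rw [le_div_iff₀ hε]; linarith
  have hq3 : 8 ≤ q ^ 3 := by nlinarith [pow_le_pow_left₀ (by norm_num) hq 3]
  have h8 : 8 ≤ q ^ (3 * d) := hq3.trans (pow_le_pow_right₀ (by linarith) (by omega))
  have h4 : 1 + 4 / ε ≤ q ^ 4 := by
    have : 4 / ε = 4 * q := by simp [q, div_eq_mul_inv]
    rw [this, pow_succ]
    nlinarith
  have hk1 : k + 1 ≤ 2 * q ^ (4 * d) := by
    have := hk.trans (pow_le_pow_left₀ (by positivity) h4 d)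
    rw [← pow_mul] at this
    nlinarith [one_le_pow₀ (M₀ := ℝ) (by linarith : 1 ≤ q) (n := 4 * d)]
  have hprod : 2 * (n + 1) * (k + 1) / δ ≤ n / δ * q ^ (7 * d) := by
    rw [show 7 * d = 3 * d + 4 * d by ring, pow_add, div_mul_eq_mul_div, div_le_div_iff_of_pos_right hδ]
    calc 2 * (n + 1) * (k + 1) ≤ 4 * n * (2 * q ^ (4 * d)) := by
          rw [mul_assoc 2]
          nlinarith
      _ = n * 8 * q ^ (4 * d) := by ring
      _ ≤ n * q ^ (3 * d) * q ^ (4 * d) := by gcongr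
      _ = _ := by ring
  have hL := Real.log_le_log (by positivity) hprod
  rw [Real.log_mul (by positivity) (by positivity), Real.log_pow] at hL
  have hnδ : 0 ≤ Real.log (n / δ) := Real.log_nonneg (by rw [le_div_iff₀ hδ]; linarith)
  have hq0 : 0 ≤ Real.log q := Real.log_nonneg (by linarith)
  have hL0 : 0 ≤ Real.log (2 * (n + 1) * (k + 1) / δ) :=
    Real.log_nonneg (by rw [le_div_iff₀ hδ]; nlinarith)
  push_cast at hL
  nlinarith

theorem natCast_mul_log_div_nonneg {N : ℕ} (hN : 0 < N) {δ : ℝ} (hδ : 0 < δ) (hδ1 : δ < 1) :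
    0 ≤ (N : ℝ) * Real.log (N / δ) :=
  mul_nonneg (by positivity)
    (Real.log_nonneg (by rw [le_div_iff₀ hδ]; linarith [(by exact_mod_cast hN : (1 : ℝ) ≤ N)]))

theorem one_sub_le_productProb_swapError_le {d T N : ℕ} (hd : 0 < d) (hN : 0 < N) {ε δ : ℝ}
    (hε : 0 < ε) (hε2 : ε ≤ 1 / 2) (hδ : 0 < δ) (hδ1 : δ < 1) {x : Fin T → Fin d → ℝ}
    (hx : ∀ t, √(∑ i, x t i ^ 2) ≤ 1 ∧ x t ⟨0, hd⟩ = 1 / 2) {y : Fin T → ℝ}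
    (hy : ∀ t, y t = 0 ∨ y t = 1) {P : Fin T → Fin (N + 1) → ℝ} (hP : ∀ t i, 0 ≤ P t i)
    (hP1 : ∀ t, ∑ i, P t i = 1) :
    1 - δ ≤ productProb P (fun ω =>
      ∑ p, weightedSwapError (fun t => if ω t = p then 1 else 0) (linearClass hd)
          (linearResidual x y p) ≤
        1400 * ((N : ℝ) * Real.log (N / δ) + (N : ℝ) * d * Real.log (1 / ε) +
          ∑ p, weightedSwapError (fun t => P t p) (linearClass hd) (linearResidual x y p) +
          ε ^ 2 * T)) := by
  obtain ⟨S, hSF, hcover, hcard⟩ := exists_linearResidual_net hd hε (fun t => (hx t).1) hy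
  have hK : 1 < 2 * ((N : ℝ) + 1) * (S.card + 1) / δ := by
    rw [lt_div_iff₀ hδ]
    nlinarith [(Nat.cast_nonneg S.card : (0 : ℝ) ≤ S.card)]
  have hmain := productProb_sum_weightedSwapError_le hP hP1
    (abs_linearResidual_le_one hd hx hy) hSF hcover (Real.log_pos hK)
  rw [Real.exp_neg, Real.exp_log (by linarith), Fintype.card_fin, Fintype.card_fin] at hmain
  refine le_of_eq_of_le ?_ (hmain.trans (productProb_mono hP fun ω h => ?_))
  · field_simp
    push_cast
    ring
  · have hlog := add_one_mul_log_le (n := N) (by exact_mod_cast hN) hd hε hε2 hδ hδ1.le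
      (Nat.cast_nonneg S.card) hcard
    have hPS := sum_nonneg fun p (_ : p ∈ univ) =>
      weightedSwapError_nonneg (F := linearClass hd) (a := linearResidual x y p) fun t => hP t p
    have hlogN := natCast_mul_log_div_nonneg hN hδ hδ1
    push_cast at h
    nlinarith

open Classical in
theorem stmt1 :
    ∃ C : ℝ, 0 < C ∧
      ∀ (d T N : ℕ) (hd : 0 < d), 0 < T → 0 < N →
      ∀ ε : ℝ, 0 < ε → ε < 1 →
      ∀ δ : ℝ, 0 < δ → δ < 1 →
      ∀ (x : Fin T → Fin d → ℝ),
        (∀ t, Real.sqrt (∑ i, x t i ^ 2) ≤ 1 ∧ x t ⟨0, hd⟩ = 1 / 2) →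
      ∀ (y : Fin T → ℝ), (∀ t, y t = 0 ∨ y t = 1) →
      ∀ (P : Fin T → Fin (N + 1) → ℝ),
        (∀ t i, 0 ≤ P t i) → (∀ t, ∑ i, P t i = 1) →
        -- membership in `F₁ˡⁱⁿ` for the linear function given by `θ`
        let inF1 : (Fin d → ℝ) → Prop := fun θ =>
          ∀ v : Fin d → ℝ, Real.sqrt (∑ i, v i ^ 2) ≤ 1 → v ⟨0, hd⟩ = 1 / 2 →
            |∑ i, θ i * v i| ≤ 1
        -- ℓ₂-swap multicalibration error of realized predictions `ω`
        let SMCal : (Fin T → Fin (N + 1)) → ℝ := fun ω =>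
          ∑ p : Fin (N + 1), (∑ t, if ω t = p then (1 : ℝ) else 0) *
            sSup {r : ℝ | ∃ θ : Fin d → ℝ, inF1 θ ∧
              r = ((∑ t, if ω t = p then
                      (∑ i, θ i * x t i) * (y t - ((p : ℕ) : ℝ) / N) else 0) /
                    (∑ t, if ω t = p then (1 : ℝ) else 0)) ^ 2}
        -- ℓ₂-pseudo swap multicalibration error
        let PSMCal : ℝ :=
          ∑ p : Fin (N + 1), (∑ t, P t p) *
            sSup {r : ℝ | ∃ θ : Fin d → ℝ, inF1 θ ∧
              r = ((∑ t, P t p * ((∑ i, θ i * x t i) * (y t - ((p : ℕ) : ℝ) / N))) /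
                    (∑ t, P t p)) ^ 2}
        1 - δ ≤
          ∑ ω : Fin T → Fin (N + 1),
            if SMCal ω ≤
                C * ((N : ℝ) * Real.log ((N : ℝ) / δ) + (N : ℝ) * (d : ℝ) * Real.log (1 / ε)
                  + PSMCal + ε ^ 2 * (T : ℝ))
            then ∏ t, P t (ω t) else 0 := by
  refine ⟨1400, by norm_num, ?_⟩
  intro d T N hd hT hN ε hε hε1 δ hδ hδ1 x hx y hy P hP hP1 inF1 SMCal PSMCal
  have hSMCal : ∀ ω, SMCal ω = ∑ p, weightedSwapError (fun t => if ω t = p then 1 else 0)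
      (linearClass hd) (linearResidual x y p) := fun ω => by
    simp only [SMCal, weightedSwapError, boole_mul]
    rfl
  have hPSMCal : PSMCal =
      ∑ p, weightedSwapError (fun t => P t p) (linearClass hd) (linearResidual x y p) := rfl
  rw [← productProb_eq_sum]
  simp only [hSMCal, hPSMCal]
  rcases le_or_gt ε (1 / 2) with hε2 | hε2
  · exact one_sub_le_productProb_swapError_le hd hN hε hε2 hδ hδ1 hx hy hP hP1
  · refine le_of_le_of_eq (by linarith) (productProb_of_forall hP1 fun ω => ?_).symm
    have hSMCal_le := sum_weightedSwapError_boole_le_card (abs_linearResidual_le_one hd hx hy) ω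
    have hPS := sum_nonneg fun p (_ : p ∈ univ) =>
      weightedSwapError_nonneg (F := linearClass hd) (a := linearResidual x y p) fun t => hP t p
    have hlogN := natCast_mul_log_div_nonneg hN hδ hδ1
    have hlogε : 0 ≤ (N : ℝ) * d * Real.log (1 / ε) :=
      mul_nonneg (by positivity) (Real.log_nonneg (by rw [le_div_iff₀ hε]; linarith))
    have hε2' : (1 : ℝ) / 4 ≤ ε ^ 2 := by nlinarith
    rw [Fintype.card_fin] at hSMCal_le
    nlinarith [mul_le_mul_of_nonneg_right hε2' (Nat.cast_nonneg T)]
end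

section
/- Let T and N be positive integers and δ ∈ (0,1). Let X be a set, F a nonempty finite collection of functions X → [−1,1], x_1,…,x_T ∈ X, y_1,…,y_T ∈ {0,1}, and P_1,…,P_T probability distributions on the grid Z. Let p_1,…,p_T be independent random variables with p_t distributed according to P_t. Then with probability at least 1 − δ, SReg_F ≤ PSReg_F + 8·√((N+1)·T·log(2·(N+1)·|F|/δ)) + 8·(N+1)·log(2·(N+1)·|F|/δ). -/
lemma exp_le_quad1 {u : ℝ} (hu : |u| ≤ 1) : Real.exp u ≤ 1 + u + u ^ 2 := by
  have h := Real.exp_bound hu (n := 3) (by norm_num)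
  have h2 := (abs_sub_le_iff.1 h).1
  have hs : ∑ m ∈ Finset.range 3, u ^ m / (m.factorial : ℝ) = 1 + u + u ^ 2 / 2 := by
    norm_num [Finset.sum_range_succ, Nat.factorial]
  rw [hs] at h2
  norm_num [Nat.factorial] at h2
  have hu3 : |u| ^ 3 ≤ u ^ 2 := by
    calc |u| ^ 3 ≤ |u| ^ 2 := pow_le_pow_of_le_one (abs_nonneg u) hu (by norm_num)
    _ = u ^ 2 := sq_abs u
  nlinarith [sq_nonneg u]

lemma exp_le_quad {z : ℝ} (hz : z ≤ 2) : Real.exp z ≤ 1 + z + (3/2) * z ^ 2 := by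
  rcases le_or_gt z (-2/3) with h | h
  · have h1 : Real.exp z ≤ 1 := Real.exp_le_one_iff.mpr (by linarith)
    nlinarith
  rcases le_or_gt z 1 with h2 | h2
  · have := exp_le_quad1 (u := z) (abs_le.2 ⟨by linarith, h2⟩)
    nlinarith [sq_nonneg z]
  · have hu : |z/2| ≤ 1 := abs_le.2 ⟨by linarith, by linarith⟩
    have h1 := exp_le_quad1 hu
    have h3 : Real.exp z = Real.exp (z/2) * Real.exp (z/2) := by
      rw [← Real.exp_add]; ring_nf
    have hpos : (0:ℝ) ≤ 1 + z/2 + (z/2)^2 := by nlinarith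
    have he := (Real.exp_pos (z/2)).le
    calc Real.exp z = Real.exp (z/2) * Real.exp (z/2) := h3
      _ ≤ (1 + z/2 + (z/2)^2) * (1 + z/2 + (z/2)^2) := by
          exact mul_le_mul h1 h1 he hpos
      _ ≤ 1 + z + (3/2) * z ^ 2 := by nlinarith [mul_nonneg (mul_nonneg (sq_nonneg z) (by linarith : (0:ℝ) ≤ z + 6)) (by linarith : (0:ℝ) ≤ 2 - z)]

-- one-step MGF bound
lemma mgf_step {n : ℕ} (Q : Fin n → ℝ) (hQ0 : ∀ p, 0 ≤ Q p) (hQ1 : ∑ p, Q p = 1)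
    (v : Fin n → ℝ) (hv : ∀ p, v p ∈ Set.Icc (-4 : ℝ) 1)
    (l : ℝ) (hl0 : 0 ≤ l) (hl : l ≤ 2/5) :
    ∑ p, Q p * Real.exp (l * (v p - ∑ q, Q q * v q)) ≤ Real.exp (75/8 * l ^ 2) := by
  obtain ⟨μ, hμ⟩ : ∃ μ : ℝ, μ = ∑ q, Q q * v q := ⟨_, rfl⟩
  rw [← hμ]
  have hμlb : -4 ≤ μ := by
    rw [hμ]
    calc (-4 : ℝ) = ∑ q, Q q * (-4) := by rw [← Finset.sum_mul, hQ1]; ring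
    _ ≤ ∑ q, Q q * v q := Finset.sum_le_sum fun q _ =>
        mul_le_mul_of_nonneg_left (hv q).1 (hQ0 q)
  have hμub : μ ≤ 1 := by
    rw [hμ]
    calc ∑ q, Q q * v q ≤ ∑ q, Q q * 1 := Finset.sum_le_sum fun q _ =>
        mul_le_mul_of_nonneg_left (hv q).2 (hQ0 q)
    _ = 1 := by rw [← Finset.sum_mul, hQ1]; ring
  have key : ∀ p, Q p * Real.exp (l * (v p - μ)) ≤
      Q p * (1 + l * (v p - μ) + (3/2) * (l * (v p - μ)) ^ 2) := by
    intro p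
    refine mul_le_mul_of_nonneg_left ?_ (hQ0 p)
    refine exp_le_quad ?_
    have h1 : v p - μ ≤ 5 := by have := (hv p).2; linarith
    nlinarith
  have hzero : ∑ p, Q p * (v p - μ) = 0 := by
    have : ∑ p, Q p * (v p - μ) = (∑ p, Q p * v p) - (∑ p, Q p) * μ := by
      rw [Finset.sum_mul, ← Finset.sum_sub_distrib]
      exact Finset.sum_congr rfl fun p _ => by ring
    rw [this, hQ1, ← hμ]; ring
  have hvar : ∑ p, Q p * (v p - μ) ^ 2 ≤ 25/4 := by
    have hexp : ∑ p, Q p * (v p - μ) ^ 2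
        = (∑ p, Q p * v p ^ 2) - 2 * μ * (∑ p, Q p * v p) + μ ^ 2 * (∑ p, Q p) := by
      rw [Finset.mul_sum, Finset.mul_sum, ← Finset.sum_sub_distrib, ← Finset.sum_add_distrib]
      exact Finset.sum_congr rfl fun p _ => by ring
    have hsq : ∑ p, Q p * v p ^ 2 ≤ ∑ p, Q p * (-3 * v p + 4) := by
      refine Finset.sum_le_sum fun p _ => mul_le_mul_of_nonneg_left ?_ (hQ0 p)
      have h1 := (hv p).1; have h2 := (hv p).2; nlinarith
    have hsum : ∑ p, Q p * (-3 * v p + 4) = -3 * μ + 4 := by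
      have : ∑ p, Q p * (-3 * v p + 4) = -3 * (∑ p, Q p * v p) + 4 * (∑ p, Q p) := by
        rw [Finset.mul_sum, Finset.mul_sum, ← Finset.sum_add_distrib]
        exact Finset.sum_congr rfl fun p _ => by ring
      rw [this, hQ1, ← hμ]; ring
    rw [hexp, ← hμ, hQ1]
    nlinarith [sq_nonneg (μ + 3/2)]
  calc ∑ p, Q p * Real.exp (l * (v p - μ))
      ≤ ∑ p, Q p * (1 + l * (v p - μ) + (3/2) * (l * (v p - μ)) ^ 2) :=
        Finset.sum_le_sum fun p _ => key p
    _ = (∑ p, Q p) + l * (∑ p, Q p * (v p - μ))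
        + (3/2) * l ^ 2 * (∑ p, Q p * (v p - μ) ^ 2) := by
        rw [Finset.mul_sum, Finset.mul_sum, ← Finset.sum_add_distrib, ← Finset.sum_add_distrib]
        exact Finset.sum_congr rfl fun p _ => by ring
    _ = 1 + (3/2) * l ^ 2 * (∑ p, Q p * (v p - μ) ^ 2) := by rw [hQ1, hzero]; ring
    _ ≤ 1 + 75/8 * l ^ 2 := by nlinarith [sq_nonneg l]
    _ ≤ Real.exp (75/8 * l ^ 2) := by
        have := Real.add_one_le_exp (75/8 * l ^ 2)
        linarith

lemma chernoff {T n : ℕ} (hT : 0 < T) (P : Fin T → Fin n → ℝ)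
    (hP0 : ∀ t p, 0 ≤ P t p) (hP1 : ∀ t, ∑ p, P t p = 1)
    (v : Fin T → Fin n → ℝ) (hv : ∀ t p, v t p ∈ Set.Icc (-4 : ℝ) 1)
    (s : ℝ) (hs0 : 0 ≤ s) (hs : s ≤ 5 * T) :
    ∑ ω : Fin T → Fin n,
        (if (∑ t, ∑ p, P t p * v t p) + s < ∑ t, v t (ω t) then ∏ t, P t (ω t) else 0)
      ≤ Real.exp (-(2/75) * s ^ 2 / T) := by
  have hT0 : (0:ℝ) < T := by exact_mod_cast hT
  set l : ℝ := 4 * s / (75 * T) with hl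
  have hl0 : 0 ≤ l := by positivity
  have hl25 : l ≤ 2/5 := by
    rw [hl, div_le_iff₀ (by positivity)]
    nlinarith
  have hW0 : ∀ ω : Fin T → Fin n, (0:ℝ) ≤ ∏ t, P t (ω t) :=
    fun ω => Finset.prod_nonneg fun t _ => hP0 t (ω t)
  have step1 : ∀ ω : Fin T → Fin n,
      (if (∑ t, ∑ p, P t p * v t p) + s < ∑ t, v t (ω t) then ∏ t, P t (ω t) else 0)
      ≤ (∏ t, P t (ω t)) *
          Real.exp (l * ((∑ t, v t (ω t)) - (∑ t, ∑ p, P t p * v t p) - s)) := by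
    intro ω
    split_ifs with h
    · nth_rewrite 1 [← mul_one (∏ t, P t (ω t))]
      refine mul_le_mul_of_nonneg_left ?_ (hW0 ω)
      rw [← Real.exp_zero]
      apply Real.exp_le_exp.2
      have h2 : 0 ≤ (∑ t, v t (ω t)) - (∑ t, ∑ p, P t p * v t p) - s := by linarith
      exact mul_nonneg hl0 h2
    · exact mul_nonneg (hW0 ω) (Real.exp_pos _).le
  calc ∑ ω : Fin T → Fin n,
        (if (∑ t, ∑ p, P t p * v t p) + s < ∑ t, v t (ω t) then ∏ t, P t (ω t) else 0)
      ≤ ∑ ω : Fin T → Fin n, (∏ t, P t (ω t)) *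
          Real.exp (l * ((∑ t, v t (ω t)) - (∑ t, ∑ p, P t p * v t p) - s)) :=
        Finset.sum_le_sum fun ω _ => step1 ω
    _ = Real.exp (-(l * s)) * ∑ ω : Fin T → Fin n,
          ∏ t, (P t (ω t) * Real.exp (l * (v t (ω t) - ∑ p, P t p * v t p))) := by
        rw [Finset.mul_sum]
        refine Finset.sum_congr rfl fun ω _ => ?_
        rw [Finset.prod_mul_distrib, ← Real.exp_sum]
        have harg : ∑ t, l * (v t (ω t) - ∑ p, P t p * v t p)
            = l * ((∑ t, v t (ω t)) - (∑ t, ∑ p, P t p * v t p)) := by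
          rw [eq_comm, ← Finset.sum_sub_distrib, Finset.mul_sum]
        have e1 : l * ((∑ t, v t (ω t)) - (∑ t, ∑ p, P t p * v t p) - s)
            = -(l * s) + l * ((∑ t, v t (ω t)) - (∑ t, ∑ p, P t p * v t p)) := by ring
        rw [e1, Real.exp_add, harg]
        ring
    _ = Real.exp (-(l * s)) *
          ∏ t, ∑ p, (P t p * Real.exp (l * (v t p - ∑ q, P t q * v t q))) := by
        rw [Fintype.prod_sum]
    _ ≤ Real.exp (-(l * s)) * ∏ t : Fin T, Real.exp (75/8 * l ^ 2) := by
        refine mul_le_mul_of_nonneg_left ?_ (Real.exp_pos _).le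
        refine Finset.prod_le_prod (fun t _ => ?_) (fun t _ => ?_)
        · exact Finset.sum_nonneg fun p _ => mul_nonneg (hP0 t p) (Real.exp_pos _).le
        · exact mgf_step (P t) (hP0 t) (hP1 t) (v t) (hv t) l hl0 hl25
    _ = Real.exp (-(2/75) * s ^ 2 / T) := by
        rw [Finset.prod_const, ← Real.exp_nat_mul, ← Real.exp_add, Finset.card_univ,
          Fintype.card_fin]
        congr 1
        rw [hl]
        field_simp
        ring



open Finset

/- **Statement 9.** From pseudo contextual swap regret to contextual swap
regret (finite hypothesis class): with probability at least `1 - δ` over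
independent predictions `p_t ~ P_t`,
`SReg_F ≤ PSReg_F + 8 √((N+1) T log(2 (N+1) |F| / δ)) + 8 (N+1) log(2 (N+1) |F| / δ)`. -/
set_option maxHeartbeats 1000000 in
open Classical in
theorem stmt9 {X : Type*} (T N : ℕ) (hT : 0 < T) (hN : 0 < N)
    (δ : ℝ) (hδ0 : 0 < δ) (hδ1 : δ < 1)
    (F : Finset (X → ℝ)) (hF : F.Nonempty)
    (hFb : ∀ f ∈ F, ∀ x' : X, f x' ∈ Set.Icc (-1 : ℝ) 1)
    (x : Fin T → X) (y : Fin T → ℝ) (hy : ∀ t, y t = 0 ∨ y t = 1)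
    (P : Fin T → Fin (N + 1) → ℝ)
    (hP0 : ∀ t i, 0 ≤ P t i) (hP1 : ∀ t, ∑ i, P t i = 1) :
    -- contextual swap regret of realized predictions `ω`
    let SReg : (Fin T → Fin (N + 1)) → ℝ := fun ω =>
      sSup {r : ℝ | ∃ g : Fin (N + 1) → X → ℝ, (∀ p, g p ∈ F) ∧
        r = ∑ t, ((((ω t : ℕ) : ℝ) / N - y t) ^ 2 - (g (ω t) (x t) - y t) ^ 2)}
    -- pseudo contextual swap regret
    let PSReg : ℝ :=
      sSup {r : ℝ | ∃ g : Fin (N + 1) → X → ℝ, (∀ p, g p ∈ F) ∧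
        r = ∑ t, ∑ p : Fin (N + 1),
              P t p * ((((p : ℕ) : ℝ) / N - y t) ^ 2 - (g p (x t) - y t) ^ 2)}
    1 - δ ≤
      ∑ ω : Fin T → Fin (N + 1),
        if SReg ω ≤
            PSReg
              + 8 * Real.sqrt (((N : ℝ) + 1) * T *
                  Real.log (2 * ((N : ℝ) + 1) * (F.card : ℝ) / δ))
              + 8 * ((N : ℝ) + 1) * Real.log (2 * ((N : ℝ) + 1) * (F.card : ℝ) / δ)
        then ∏ t, P t (ω t) else 0 := by
  intro SReg PSReg
  have hT0 : (0:ℝ) < T := by exact_mod_cast hT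
  have hFc1 : (1:ℝ) ≤ (F.card : ℝ) := by
    exact_mod_cast Nat.one_le_iff_ne_zero.mpr (Finset.card_ne_zero_of_mem hF.choose_spec)
  set L : ℝ := Real.log (2 * ((N : ℝ) + 1) * (F.card : ℝ) / δ) with hLdef
  set s : ℝ := 8 * Real.sqrt (((N : ℝ) + 1) * T * L) with hsdef
  set E : ℝ := 8 * ((N : ℝ) + 1) * L with hEdef
  have hN1 : (2:ℝ) ≤ (N:ℝ) + 1 := by
    have : (1:ℝ) ≤ (N:ℝ) := by exact_mod_cast hN
    linarith
  have hCpos : (0:ℝ) < 2 * ((N : ℝ) + 1) * (F.card : ℝ) / δ := by positivity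
  have hL0 : 0 ≤ L := by
    rw [hLdef]
    apply Real.log_nonneg
    rw [le_div_iff₀ hδ0]
    nlinarith
  have hs0 : 0 ≤ s := by rw [hsdef]; positivity
  have hE0 : 0 ≤ E := by rw [hEdef]; positivity
  have hsq : s ^ 2 = 64 * (((N : ℝ) + 1) * T * L) := by
    rw [hsdef, mul_pow, Real.sq_sqrt (by positivity)]; norm_num
  -- abbreviations
  set val : Fin T → Fin (N+1) → (Fin (N + 1) → X → ℝ) → ℝ :=
    fun t p g => (((p : ℕ) : ℝ) / N - y t) ^ 2 - (g p (x t) - y t) ^ 2 with hvaldef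
  set A : (Fin T → Fin (N+1)) → (Fin (N + 1) → X → ℝ) → ℝ :=
    fun ω g => ∑ t, val t (ω t) g with hAdef
  set B : (Fin (N + 1) → X → ℝ) → ℝ :=
    fun g => ∑ t, ∑ p, P t p * val t p g with hBdef
  have hSReg : ∀ ω, SReg ω = sSup {r : ℝ | ∃ g : Fin (N + 1) → X → ℝ,
      (∀ p, g p ∈ F) ∧ r = A ω g} := fun ω => rfl
  have hPSReg : PSReg = sSup {r : ℝ | ∃ g : Fin (N + 1) → X → ℝ,
      (∀ p, g p ∈ F) ∧ r = B g} := rfl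
  have hval_eq : ∀ t p (g : Fin (N + 1) → X → ℝ),
      val t p g = (((p : ℕ) : ℝ) / N - y t) ^ 2 - (g p (x t) - y t) ^ 2 :=
    fun _ _ _ => rfl
  have hA_eq : ∀ ω g, A ω g = ∑ t, val t (ω t) g := fun _ _ => rfl
  have hB_eq : ∀ g, B g = ∑ t, ∑ p, P t p * val t p g := fun _ => rfl
  clear_value SReg PSReg val A B
  -- value bounds
  have hvb : ∀ (g : Fin (N + 1) → X → ℝ), (∀ p, g p ∈ F) →
      ∀ t p, val t p g ∈ Set.Icc (-4 : ℝ) 1 := by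
    intro g hg t p
    have hN0 : (0:ℝ) < N := by exact_mod_cast hN
    have hp0 : (0:ℝ) ≤ ((p : ℕ) : ℝ) / N := by positivity
    have hp1 : ((p : ℕ) : ℝ) / N ≤ 1 := by
      rw [div_le_one hN0]
      exact_mod_cast Nat.lt_succ_iff.mp p.isLt
    have hg1 := (hFb (g p) (hg p) (x t)).1
    have hg2 := (hFb (g p) (hg p) (x t)).2
    have hsq1 : ((((p : ℕ) : ℝ)) / N - y t) ^ 2 ≤ 1 := by
      rcases hy t with h | h <;> rw [h] <;> nlinarith
    have hsq2 : (g p (x t) - y t) ^ 2 ≤ 4 := by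
      rcases hy t with h | h <;> rw [h] <;> nlinarith
    rw [hval_eq]
    constructor
    · nlinarith [sq_nonneg ((((p : ℕ) : ℝ)) / N - y t)]
    · nlinarith [sq_nonneg (g p (x t) - y t)]
  -- A and B bounds
  have hA_ub : ∀ ω g, (∀ p, g p ∈ F) → A ω g ≤ T := by
    intro ω g hg
    rw [hA_eq]
    calc ∑ t, val t (ω t) g ≤ ∑ _t : Fin T, (1:ℝ) :=
      Finset.sum_le_sum fun t _ => (hvb g hg t (ω t)).2
    _ = T := by simp
  have hB_lb : ∀ g, (∀ p, g p ∈ F) → -4 * T ≤ B g := by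
    intro g hg
    have hstep : ∀ t : Fin T, (-4:ℝ) ≤ ∑ p, P t p * val t p g := by
      intro t
      have h1 : (-4:ℝ) = ∑ p, P t p * (-4) := by rw [← Finset.sum_mul, hP1]; ring
      rw [h1]
      exact Finset.sum_le_sum fun p _ =>
        mul_le_mul_of_nonneg_left (hvb g hg t p).1 (hP0 t p)
    have h2 : (-4:ℝ) * T = ∑ _t : Fin T, (-4:ℝ) := by simp [mul_comm]
    rw [h2, hB_eq]
    exact Finset.sum_le_sum fun t _ => hstep t
  have hB_ub : ∀ g, (∀ p, g p ∈ F) → B g ≤ T := by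
    intro g hg
    have hstep : ∀ t : Fin T, ∑ p, P t p * val t p g ≤ 1 := by
      intro t
      have h1 : (1:ℝ) = ∑ p, P t p * 1 := by rw [← Finset.sum_mul, hP1]; ring
      rw [h1]
      exact Finset.sum_le_sum fun p _ =>
        mul_le_mul_of_nonneg_left (hvb g hg t p).2 (hP0 t p)
    have h2 : (T:ℝ) = ∑ _t : Fin T, (1:ℝ) := by simp
    rw [h2, hB_eq]
    exact Finset.sum_le_sum fun t _ => hstep t
  -- a default hypothesis family
  obtain ⟨f0, hf0⟩ := hF
  have hg0 : ∀ p : Fin (N+1), (fun _ : Fin (N+1) => f0) p ∈ F := fun _ => hf0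
  have hSne : ∀ ω, {r : ℝ | ∃ g : Fin (N + 1) → X → ℝ,
      (∀ p, g p ∈ F) ∧ r = A ω g}.Nonempty :=
    fun ω => ⟨A ω (fun _ => f0), ⟨_, hg0, rfl⟩⟩
  have hPSne : {r : ℝ | ∃ g : Fin (N + 1) → X → ℝ,
      (∀ p, g p ∈ F) ∧ r = B g}.Nonempty := ⟨B (fun _ => f0), ⟨_, hg0, rfl⟩⟩
  have hPSbdd : BddAbove {r : ℝ | ∃ g : Fin (N + 1) → X → ℝ,
      (∀ p, g p ∈ F) ∧ r = B g} := by
    refine ⟨T, ?_⟩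
    rintro r ⟨g, hg, rfl⟩
    exact hB_ub g hg
  have hPS_le : ∀ g, (∀ p, g p ∈ F) → B g ≤ PSReg := by
    intro g hg
    rw [hPSReg]
    exact le_csSup hPSbdd ⟨g, hg, rfl⟩
  have hPS_lb : -4 * T ≤ PSReg := le_trans (hB_lb _ hg0) (hPS_le _ hg0)
  have hWsum : ∑ ω : Fin T → Fin (N+1), ∏ t, P t (ω t) = 1 := by
    rw [← Fintype.prod_sum]
    simp [hP1]
  have hW0 : ∀ ω : Fin T → Fin (N+1), (0:ℝ) ≤ ∏ t, P t (ω t) :=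
    fun ω => Finset.prod_nonneg fun t _ => hP0 t (ω t)
  by_cases hcase : s ≤ 5 * T
  case neg =>
    -- deterministic regime: every ω is good
    have hgood : ∀ ω : Fin T → Fin (N+1), SReg ω ≤ PSReg + s + E := by
      intro ω
      rw [hSReg]
      apply csSup_le (hSne ω)
      rintro r ⟨g, hg, rfl⟩
      have h1 := hA_ub ω g hg
      have h2 := hB_lb g hg
      have h3 := hPS_le g hg
      push_neg at hcase
      linarith
    calc 1 - δ ≤ 1 := by linarith
    _ = ∑ ω : Fin T → Fin (N+1), ∏ t, P t (ω t) := hWsum.symm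
    _ = _ := by
        refine Finset.sum_congr rfl fun ω _ => ?_
        rw [if_pos (hgood ω)]
  case pos =>
    -- concentration regime
    set G : Finset (Fin (N + 1) → X → ℝ) :=
      Fintype.piFinset (fun _ : Fin (N+1) => F) with hGdef
    have hsum_split : ∀ ω : Fin T → Fin (N+1),
        (if SReg ω ≤ PSReg + s + E then ∏ t, P t (ω t) else 0)
        = (∏ t, P t (ω t)) - (if SReg ω ≤ PSReg + s + E then 0 else ∏ t, P t (ω t)) := by
      intro ω; split_ifs <;> ring
    have hbad_le : ∀ ω : Fin T → Fin (N+1),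
        (if SReg ω ≤ PSReg + s + E then 0 else ∏ t, P t (ω t))
        ≤ ∑ g ∈ G, (if B g + s < A ω g then ∏ t, P t (ω t) else 0) := by
      intro ω
      split_ifs with h
      · refine Finset.sum_nonneg fun g _ => ?_
        split_ifs
        · exact hW0 ω
        · exact le_rfl
      · push_neg at h
        rw [hSReg] at h
        obtain ⟨r, ⟨g, hg, rfl⟩, hr⟩ := exists_lt_of_lt_csSup (hSne ω) h
        have hgG : g ∈ G := by
          rw [hGdef, Fintype.mem_piFinset]; exact hg
        have hlt : B g + s < A ω g := by
          have := hPS_le g hg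
          linarith
        calc ∏ t, P t (ω t)
            = (if B g + s < A ω g then ∏ t, P t (ω t) else 0) := by rw [if_pos hlt]
          _ ≤ ∑ g ∈ G, (if B g + s < A ω g then ∏ t, P t (ω t) else 0) := by
              refine Finset.single_le_sum
                (f := fun g => if B g + s < A ω g then ∏ t, P t (ω t) else 0)
                (fun g' _ => ?_) hgG
              split_ifs
              · exact hW0 ω
              · exact le_rfl
    have hchern : ∀ g ∈ G, ∑ ω : Fin T → Fin (N+1),
        (if B g + s < A ω g then ∏ t, P t (ω t) else 0)
        ≤ Real.exp (-(2/75) * s ^ 2 / T) := by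
      intro g hgG
      have hg : ∀ p, g p ∈ F := by rwa [hGdef, Fintype.mem_piFinset] at hgG
      have h := chernoff hT P hP0 hP1 (fun t p => val t p g)
        (fun t p => hvb g hg t p) s hs0 hcase
      simp only [← hA_eq, ← hB_eq] at h
      exact h
    have hGcard : (G.card : ℝ) = (F.card : ℝ) ^ (N + 1) := by
      rw [hGdef, Fintype.card_piFinset]
      simp
    have hfinal : (G.card : ℝ) * Real.exp (-(2/75) * s ^ 2 / T) ≤ δ := by
      have h1 : -(2/75) * s ^ 2 / T ≤ -(((N:ℝ) + 1) * L) := by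
        rw [hsq]
        rw [div_le_iff₀ hT0]
        nlinarith
      have h2 : Real.exp (-(((N:ℝ) + 1) * L)) = (δ / (2 * ((N:ℝ) + 1) * (F.card:ℝ))) ^ (N + 1) := by
        have hexpL : Real.exp L = 2 * ((N : ℝ) + 1) * (F.card : ℝ) / δ := Real.exp_log hCpos
        have : -(((N:ℝ) + 1) * L) = ((N:ℕ) + 1 : ℕ) * (-L) := by push_cast; ring
        rw [this, Real.exp_nat_mul, Real.exp_neg, hexpL]
        congr 1
        rw [inv_div]
      calc (G.card : ℝ) * Real.exp (-(2/75) * s ^ 2 / T)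
          ≤ (G.card : ℝ) * Real.exp (-(((N:ℝ) + 1) * L)) := by
            refine mul_le_mul_of_nonneg_left (Real.exp_le_exp.2 h1) (by positivity)
        _ = (δ / (2 * ((N:ℝ) + 1))) ^ (N + 1) := by
            rw [h2, hGcard, ← mul_pow]
            congr 1
            have hFc0 : (F.card : ℝ) ≠ 0 := by linarith
            field_simp
        _ ≤ δ / (2 * ((N:ℝ) + 1)) := by
            apply pow_le_of_le_one (by positivity)
            · rw [div_le_one (by linarith)]; linarith
            · exact Nat.succ_ne_zero N
        _ ≤ δ := by
            rw [div_le_iff₀ (by linarith)]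
            nlinarith
    have hbad_sum : ∑ ω : Fin T → Fin (N+1),
        (if SReg ω ≤ PSReg + s + E then 0 else ∏ t, P t (ω t)) ≤ δ := by
      calc ∑ ω : Fin T → Fin (N+1), (if SReg ω ≤ PSReg + s + E then 0 else ∏ t, P t (ω t))
          ≤ ∑ ω : Fin T → Fin (N+1), ∑ g ∈ G, (if B g + s < A ω g then ∏ t, P t (ω t) else 0) :=
            Finset.sum_le_sum fun ω _ => hbad_le ω
        _ = ∑ g ∈ G, ∑ ω : Fin T → Fin (N+1), (if B g + s < A ω g then ∏ t, P t (ω t) else 0) :=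
            Finset.sum_comm
        _ ≤ ∑ _g ∈ G, Real.exp (-(2/75) * s ^ 2 / T) := Finset.sum_le_sum hchern
        _ = (G.card : ℝ) * Real.exp (-(2/75) * s ^ 2 / T) := by
            rw [Finset.sum_const, nsmul_eq_mul]
        _ ≤ δ := hfinal
    calc 1 - δ
        ≤ (∑ ω : Fin T → Fin (N+1), ∏ t, P t (ω t))
          - ∑ ω : Fin T → Fin (N+1), (if SReg ω ≤ PSReg + s + E then 0 else ∏ t, P t (ω t)) := by
          rw [hWsum]; linarith
      _ = _ := by
          rw [← Finset.sum_sub_distrib]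
          exact Finset.sum_congr rfl fun ω _ => (hsum_split ω).symm
end
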